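/- arXiv:2201.00354 — 2 statements merged into one kernel-verified Lean document; each statement's English description precedes it below -/
import Mathlib

section
/- (Curriculum Property in Variable Selection, Proposition 1.) Let A ⊆ Fin L with |A| = M be such that Y is conditionally independent of X_{Aᶜ} given X_A, let λ ≥ 0 and M ≤ N₁ < N₂ ≤ L. Suppose F₁ ⊆ Fin L satisfies A ⊆ F₁ and |F₁| = N₁ (so that F₁ minimizes L_{N₁}(·; x) at every x). Then for every set S ⊆ (Fin L) \ F₁ with |S| = N₂ − N₁, the set F₂ = F₁ ∪ S satisfies |F₂| = N₂, L_{N₂}(F₂; x) = 0, and F₂ minimizes L_{N₂}(·; x) over all subsets of Fin L, for every x with P(X = x) > 0. -/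
open scoped Classical
open Finset

/-- Probability of an event under a (finite) probability mass `P`. -/
noncomputable def pr {Ω : Type*} [Fintype Ω] (P : Ω → ℝ) (E : Ω → Prop) : ℝ :=
  ∑ ω, if E ω then P ω else 0

/-- Conditional probability `P(E | C)`. -/
noncomputable def condPr {Ω : Type*} [Fintype Ω] (P : Ω → ℝ) (E C : Ω → Prop) : ℝ :=
  pr P (fun ω => E ω ∧ C ω) / pr P C

/-- The event `{X_F = x_F}`, i.e. `X ω` agrees with `x` on the index set `F`. -/
def evSel {Ω V : Type*} {L : ℕ} (X : Ω → Fin L → V) (F : Finset (Fin L))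
    (x : Fin L → V) : Ω → Prop :=
  fun ω => ∀ i ∈ F, X ω i = x i

/-- Kullback–Leibler divergence between two pmfs on a finite type. -/
noncomputable def klDiv {𝒴 : Type*} [Fintype 𝒴] (p q : 𝒴 → ℝ) : ℝ :=
  ∑ y, p y * Real.log (p y / q y)

/-- The conditional distribution `P(Y = · | C)`. -/
noncomputable def condDist {Ω 𝒴 : Type*} [Fintype Ω] (P : Ω → ℝ) (Y : Ω → 𝒴)
    (C : Ω → Prop) : 𝒴 → ℝ :=
  fun y => condPr P (fun ω => Y ω = y) C

/-- Per-instance INVASE objective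
`L_N(F; x) = KL(P(Y = · | X = x) ‖ P(Y = · | X_F = x_F)) + λ·| |F| − N |`. -/
noncomputable def invaseObj {Ω V 𝒴 : Type*} [Fintype Ω] [Fintype 𝒴] {L : ℕ}
    (P : Ω → ℝ) (X : Ω → Fin L → V) (Y : Ω → 𝒴) (lam : ℝ) (N : ℕ)
    (F : Finset (Fin L)) (x : Fin L → V) : ℝ :=
  klDiv (condDist P Y (fun ω => X ω = x)) (condDist P Y (evSel X F x))
    + lam * |(F.card : ℝ) - (N : ℝ)|

/-! Conditional independence makes `P(Y | X = x)` equal to `P(Y | X_A = x_A)`; summing the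
cross-multiplied identity over the fibre `{x' | x'_F = x_F}` shows that `P(Y | X_F = x_F)` equals it
as well for every `F ⊇ A`. Hence the KL term of `L_{N₂}` vanishes at `F₁ ∪ S`, whose cardinality is
exactly `N₂`, while `L_{N₂}` is nonnegative everywhere by Gibbs' inequality. -/

lemma sub_le_mul_log_div {p q : ℝ} (hp : 0 ≤ p) (hq : 0 ≤ q) (hpq : 0 < p → 0 < q) :
    p - q ≤ p * Real.log (p / q) := by
  rcases hp.eq_or_lt with rfl | hp
  · simpa using hq
  have hlog := Real.one_sub_inv_le_log_of_pos (div_pos hp (hpq hp))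
  rw [inv_div] at hlog
  calc p - q = p * (1 - q / p) := by field_simp
    _ ≤ p * Real.log (p / q) := mul_le_mul_of_nonneg_left hlog hp.le

lemma klDiv_nonneg {𝒴 : Type*} [Fintype 𝒴] {p q : 𝒴 → ℝ} (hp : ∀ y, 0 ≤ p y)
    (hq : ∀ y, 0 ≤ q y) (hpq : ∀ y, 0 < p y → 0 < q y) (hsum : ∑ y, q y ≤ ∑ y, p y) :
    0 ≤ klDiv p q :=
  calc (0 : ℝ) ≤ ∑ y, (p y - q y) := by rw [sum_sub_distrib]; linarith
    _ ≤ klDiv p q := sum_le_sum fun y _ => sub_le_mul_log_div (hp y) (hq y) (hpq y)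

lemma klDiv_self_eq_zero {𝒴 : Type*} [Fintype 𝒴] (p : 𝒴 → ℝ) : klDiv p p = 0 :=
  sum_eq_zero fun y _ => by
    rcases eq_or_ne (p y) 0 with h | h <;> simp [h]

section Probability

variable {Ω : Type*} [Fintype Ω] {P : Ω → ℝ}

lemma pr_nonneg (hP : ∀ ω, 0 ≤ P ω) (E : Ω → Prop) : 0 ≤ pr P E :=
  sum_nonneg fun ω _ => by split_ifs <;> simp [hP ω]

lemma pr_mono (hP : ∀ ω, 0 ≤ P ω) {E E' : Ω → Prop} (h : ∀ ω, E ω → E' ω) :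
    pr P E ≤ pr P E' :=
  sum_le_sum fun ω _ => by
    by_cases hE : E ω
    · simp [hE, h ω hE]
    · split_ifs <;> simp [hP ω]

lemma pr_congr {E E' : Ω → Prop} (h : ∀ ω, E ω ↔ E' ω) : pr P E = pr P E' :=
  sum_congr rfl fun ω _ => by simp only [h ω]

lemma sum_pr_eq_and_eq {𝒴 : Type*} [Fintype 𝒴] (Y : Ω → 𝒴) (C : Ω → Prop) :
    ∑ y, pr P (fun ω => Y ω = y ∧ C ω) = pr P C := by
  unfold pr
  rw [sum_comm]
  refine sum_congr rfl fun ω _ => ?_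
  by_cases hC : C ω <;> simp [hC]

lemma pr_and_comp_eq_sum {β : Type*} [Fintype β] (f : Ω → β) (Q : Ω → Prop) (R : β → Prop)
    [DecidablePred R] :
    pr P (fun ω => Q ω ∧ R (f ω)) = ∑ b with R b, pr P (fun ω => Q ω ∧ f ω = b) := by
  unfold pr
  rw [sum_comm]
  refine sum_congr rfl fun ω _ => ?_
  by_cases hQ : Q ω <;> by_cases hR : R (f ω) <;> simp [hQ, hR]

end Probability

section CondDist

variable {Ω 𝒴 : Type*} [Fintype Ω] {P : Ω → ℝ} (Y : Ω → 𝒴)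

lemma condDist_nonneg (hP : ∀ ω, 0 ≤ P ω) (C : Ω → Prop) (y : 𝒴) : 0 ≤ condDist P Y C y :=
  div_nonneg (pr_nonneg hP _) (pr_nonneg hP _)

lemma condDist_pos_of_imp (hP : ∀ ω, 0 ≤ P ω) {C C' : Ω → Prop} (hCC' : ∀ ω, C ω → C' ω)
    {y : 𝒴} (h : 0 < condDist P Y C y) : 0 < condDist P Y C' y := by
  obtain ⟨hnum, hden⟩ : 0 < pr P (fun ω => Y ω = y ∧ C ω) ∧ 0 < pr P C := by
    rcases div_pos_iff.mp h with h | ⟨h, -⟩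
    · exact h
    · exact absurd h (pr_nonneg hP _).not_gt
  exact div_pos (hnum.trans_le (pr_mono hP fun ω h => ⟨h.1, hCC' ω h.2⟩))
    (hden.trans_le (pr_mono hP hCC'))

lemma condDist_eq_of_mul_eq {C D : Ω → Prop} (hC : 0 < pr P C) (hD : 0 < pr P D)
    (h : ∀ y, pr P (fun ω => Y ω = y ∧ C ω) * pr P D = pr P (fun ω => Y ω = y ∧ D ω) * pr P C) :
    condDist P Y C = condDist P Y D :=
  funext fun y => (div_eq_div_iff hC.ne' hD.ne').mpr (h y)

variable [Fintype 𝒴]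

lemma sum_condDist {C : Ω → Prop} (hC : 0 < pr P C) : ∑ y, condDist P Y C y = 1 := by
  simp only [condDist, condPr]
  rw [← sum_div, sum_pr_eq_and_eq, div_self hC.ne']

lemma klDiv_condDist_nonneg_of_imp (hP : ∀ ω, 0 ≤ P ω) {C C' : Ω → Prop} (hC : 0 < pr P C)
    (hCC' : ∀ ω, C ω → C' ω) : 0 ≤ klDiv (condDist P Y C) (condDist P Y C') :=
  klDiv_nonneg (condDist_nonneg Y hP C) (condDist_nonneg Y hP C')
    (fun _ => condDist_pos_of_imp Y hP hCC')
    (by rw [sum_condDist Y hC, sum_condDist Y (hC.trans_le (pr_mono hP hCC'))])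

end CondDist

section Selection

variable {Ω V 𝒴 : Type*} {L : ℕ} (X : Ω → Fin L → V) {A F : Finset (Fin L)} {x : Fin L → V}

lemma evSel_of_eq {ω : Ω} (h : X ω = x) (F : Finset (Fin L)) : evSel X F x ω :=
  fun i _ => by rw [h]

lemma evSel_eq_of_eqOn {x' : Fin L → V} (h : ∀ i ∈ F, x' i = x i) :
    evSel X F x' = evSel X F x :=
  funext fun ω => propext <| forall₂_congr fun i hi => by rw [h i hi]

variable [Fintype Ω] (Y : Ω → 𝒴)

/-- `Y` is conditionally independent of `X_{Aᶜ}` given `X_A`. -/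
def CondIndepSel (P : Ω → ℝ) (A : Finset (Fin L)) : Prop :=
  ∀ (x : Fin L → V) (y : 𝒴), 0 < pr P (evSel X A x) →
    pr P (fun ω => Y ω = y ∧ X ω = x) * pr P (evSel X A x)
      = pr P (fun ω => Y ω = y ∧ evSel X A x ω) * pr P (fun ω => X ω = x)

variable {P : Ω → ℝ}

lemma pr_evSel_pos (hP : ∀ ω, 0 ≤ P ω) (hx : 0 < pr P (fun ω => X ω = x))
    (F : Finset (Fin L)) : 0 < pr P (evSel X F x) :=
  hx.trans_le (pr_mono hP fun _ h => evSel_of_eq X h F)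

lemma invaseObj_nonneg [Fintype 𝒴] (hP : ∀ ω, 0 ≤ P ω) {lam : ℝ} (hlam : 0 ≤ lam)
    (hx : 0 < pr P (fun ω => X ω = x)) (N : ℕ) (F : Finset (Fin L)) :
    0 ≤ invaseObj P X Y lam N F x :=
  add_nonneg (klDiv_condDist_nonneg_of_imp Y hP hx fun _ h => evSel_of_eq X h F)
    (mul_nonneg hlam (abs_nonneg _))

variable [Fintype V]

lemma pr_and_evSel_mul_of_subset (hCI : CondIndepSel X Y P A) (hAF : A ⊆ F)
    (hA : 0 < pr P (evSel X A x)) (y : 𝒴) :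
    pr P (fun ω => Y ω = y ∧ evSel X F x ω) * pr P (evSel X A x)
      = pr P (fun ω => Y ω = y ∧ evSel X A x ω) * pr P (evSel X F x) := by
  have hfib (Q : Ω → Prop) : pr P (fun ω => Q ω ∧ evSel X F x ω)
      = ∑ x' with ∀ i ∈ F, x' i = x i, pr P (fun ω => Q ω ∧ X ω = x') :=
    pr_and_comp_eq_sum X Q (fun x' => ∀ i ∈ F, x' i = x i)
  rw [← pr_congr (E := fun ω => True ∧ evSel X F x ω) fun ω => (true_and _).to_iff,
    hfib (fun ω => Y ω = y), hfib (fun _ => True), sum_mul, mul_sum]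
  refine sum_congr rfl fun x' hx' => ?_
  have hA' : evSel X A x' = evSel X A x :=
    evSel_eq_of_eqOn X fun i hi => (mem_filter.mp hx').2 i (hAF hi)
  have hCIx' := hCI x' y (hA' ▸ hA)
  rw [hA'] at hCIx'
  simpa only [true_and] using hCIx'

lemma condDist_eq_condDist_evSel (hP : ∀ ω, 0 ≤ P ω) (hCI : CondIndepSel X Y P A)
    (hAF : A ⊆ F) (hx : 0 < pr P (fun ω => X ω = x)) :
    condDist P Y (fun ω => X ω = x) = condDist P Y (evSel X F x) := by
  have hA := pr_evSel_pos X hP hx A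
  calc condDist P Y (fun ω => X ω = x) = condDist P Y (evSel X A x) :=
        condDist_eq_of_mul_eq Y hx hA fun y => hCI x y hA
    _ = condDist P Y (evSel X F x) :=
        (condDist_eq_of_mul_eq Y (pr_evSel_pos X hP hx F) hA
          (pr_and_evSel_mul_of_subset X Y hCI hAF hA)).symm

variable [Fintype 𝒴]

lemma invaseObj_card_eq_zero (hP : ∀ ω, 0 ≤ P ω) (hCI : CondIndepSel X Y P A) (hAF : A ⊆ F)
    (hx : 0 < pr P (fun ω => X ω = x)) (lam : ℝ) : invaseObj P X Y lam F.card F x = 0 := by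
  rw [invaseObj, condDist_eq_condDist_evSel X Y hP hCI hAF hx, klDiv_self_eq_zero]
  simp

end Selection

theorem stmt2_general {Ω V 𝒴 : Type*} [Fintype Ω] [Fintype V] [Fintype 𝒴] {L N₁ N₂ : ℕ}
    (X : Ω → Fin L → V) (Y : Ω → 𝒴) (P : Ω → ℝ)
    (hP : ∀ ω, 0 ≤ P ω)
    (A : Finset (Fin L))
    (hCI : ∀ (x : Fin L → V) (y : 𝒴), 0 < pr P (evSel X A x) →
      pr P (fun ω => Y ω = y ∧ X ω = x) * pr P (evSel X A x)
        = pr P (fun ω => Y ω = y ∧ evSel X A x ω) * pr P (fun ω => X ω = x))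
    (lam : ℝ) (hlam : 0 ≤ lam) (hN₁N₂ : N₁ < N₂)
    (F₁ : Finset (Fin L)) (hAF₁ : A ⊆ F₁) (hF₁card : F₁.card = N₁)
    (S : Finset (Fin L)) (hS : S ⊆ F₁ᶜ) (hScard : S.card = N₂ - N₁) :
    (F₁ ∪ S).card = N₂ ∧
      ∀ x : Fin L → V, 0 < pr P (fun ω => X ω = x) →
        invaseObj P X Y lam N₂ (F₁ ∪ S) x = 0 ∧
          ∀ F' : Finset (Fin L),
            invaseObj P X Y lam N₂ (F₁ ∪ S) x ≤ invaseObj P X Y lam N₂ F' x := by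
  have hcard : (F₁ ∪ S).card = N₂ := by
    rw [card_union_of_disjoint (subset_compl_iff_disjoint_right.mp hS).symm, hF₁card, hScard]
    omega
  refine ⟨hcard, fun x hx => ?_⟩
  have hzero : invaseObj P X Y lam N₂ (F₁ ∪ S) x = 0 :=
    hcard ▸ invaseObj_card_eq_zero X Y hP hCI (hAF₁.trans subset_union_left) hx lam
  exact ⟨hzero, fun F' => hzero ▸ invaseObj_nonneg X Y hP hlam hx N₂ F'⟩

/-- **Curriculum property in variable selection** (Proposition 1). If `F₁ ⊇ A` has
cardinality `N₁`, then for any set `S` of `N₂ − N₁` indices outside `F₁`, the set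
`F₂ = F₁ ∪ S` has cardinality `N₂`, achieves `L_{N₂}(F₂; x) = 0`, and minimizes
`L_{N₂}(·; x)` over all subsets, at every `x` with `P(X = x) > 0`. -/
theorem stmt2 {Ω V 𝒴 : Type*} [Fintype Ω] [Fintype V] [Fintype 𝒴] {L M N₁ N₂ : ℕ}
    (X : Ω → Fin L → V) (Y : Ω → 𝒴) (P : Ω → ℝ)
    (hP : ∀ ω, 0 ≤ P ω) (hPsum : ∑ ω, P ω = 1)
    (A : Finset (Fin L)) (hAcard : A.card = M)
    (hCI : ∀ (x : Fin L → V) (y : 𝒴), 0 < pr P (evSel X A x) →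
      pr P (fun ω => Y ω = y ∧ X ω = x) * pr P (evSel X A x)
        = pr P (fun ω => Y ω = y ∧ evSel X A x ω) * pr P (fun ω => X ω = x))
    (lam : ℝ) (hlam : 0 ≤ lam) (hMN₁ : M ≤ N₁) (hN₁N₂ : N₁ < N₂) (hN₂L : N₂ ≤ L)
    (F₁ : Finset (Fin L)) (hAF₁ : A ⊆ F₁) (hF₁card : F₁.card = N₁)
    (S : Finset (Fin L)) (hS : S ⊆ F₁ᶜ) (hScard : S.card = N₂ - N₁) :
    (F₁ ∪ S).card = N₂ ∧
      ∀ x : Fin L → V, 0 < pr P (fun ω => X ω = x) →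
        invaseObj P X Y lam N₂ (F₁ ∪ S) x = 0 ∧
          ∀ F' : Finset (Fin L),
            invaseObj P X Y lam N₂ (F₁ ∪ S) x ≤ invaseObj P X Y lam N₂ F' x :=
  stmt2_general X Y P hP A hCI lam hlam hN₁N₂ F₁ hAF₁ hF₁card S hS hScard
end

section
/- Suppose r(s, mask(g₁(s), a)) = r(s, a) and T(s, mask(g₂(s), a)) = T(s, a) for all s ∈ S and a : Fin d → ℝ, and let g be the pointwise OR of g₁ and g₂. Then for every state s ∈ S, the optimal value over masked policies equals the optimal value over all policies: ⨆_{π : S → A} V^{π^{(g)}}(s) = ⨆_{π : S → A} V^π(s), where π^{(g)}(s) = mask(g(s), π(s)). -/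
/-- Trajectory of a deterministic MDP under policy `π` from initial state `s`:
`s₀ = s`, `s_{t+1} = T (s_t, π s_t)`. -/
def traj {S A : Type*} (T : S × A → S) (π : S → A) (s : S) : ℕ → S
  | 0 => s
  | t + 1 => T (traj T π s t, π (traj T π s t))

/-- Value function `V^π(s) = ∑_{t=0}^∞ γ^t · r(s_t, π s_t)`. -/
noncomputable def Vpi {S A : Type*} (T : S × A → S) (r : S × A → ℝ) (γ : ℝ)
    (π : S → A) (s : S) : ℝ :=
  ∑' t : ℕ, γ ^ t * r (traj T π s t, π (traj T π s t))

/-- Masked action: `mask(m, a)(i) = a i` if `m i = true`, else `0`. -/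
def maskAct {d : ℕ} (m : Fin d → Bool) (a : Fin d → ℝ) : Fin d → ℝ :=
  fun i => if m i then a i else 0

/-! Since `g` contains both `g₁` and `g₂`, masking with `g` changes neither the reward nor the
next state, so every policy and its `g`-masked version produce the same trajectory and the same
value; the two suprema range over the same values. -/

theorem traj_congr {S A : Type*} {T : S × A → S} {π π' : S → A}
    (hT : ∀ s, T (s, π' s) = T (s, π s)) (s : S) (t : ℕ) :
    traj T π' s t = traj T π s t := by
  induction t with
  | zero => rfl
  | succ t ih => simp only [traj, ih, hT]

theorem Vpi_congr {S A : Type*} {T : S × A → S} {r : S × A → ℝ} (γ : ℝ) {π π' : S → A}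
    (hT : ∀ s, T (s, π' s) = T (s, π s)) (hr : ∀ s, r (s, π' s) = r (s, π s)) (s : S) :
    Vpi T r γ π' s = Vpi T r γ π s :=
  tsum_congr fun t => by rw [traj_congr hT, hr]

theorem maskAct_maskAct_of_imp {d : ℕ} {m m' : Fin d → Bool} (h : ∀ i, m i → m' i)
    (a : Fin d → ℝ) : maskAct m (maskAct m' a) = maskAct m a := by
  funext i
  by_cases hi : m i <;> simp [maskAct, hi, h i]

theorem apply_maskAct_of_imp {d : ℕ} {β : Type*} {f : (Fin d → ℝ) → β} {m m' : Fin d → Bool}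
    (hf : ∀ a, f (maskAct m a) = f a) (h : ∀ i, m i → m' i) (a : Fin d → ℝ) :
    f (maskAct m' a) = f a := by
  rw [← hf, maskAct_maskAct_of_imp h, hf]

theorem stmt8_general {S : Type*} {d : ℕ}
    (T : S × (Fin d → ℝ) → S) (r : S × (Fin d → ℝ) → ℝ) (γ : ℝ)
    (g₁ g₂ g : S → Fin d → Bool)
    (hg : ∀ (s : S) (i : Fin d), g s i = (g₁ s i || g₂ s i))
    (hr : ∀ (s : S) (a : Fin d → ℝ), r (s, maskAct (g₁ s) a) = r (s, a))
    (hT : ∀ (s : S) (a : Fin d → ℝ), T (s, maskAct (g₂ s) a) = T (s, a))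
    (s : S) :
    (⨆ π : S → Fin d → ℝ, Vpi T r γ (fun s' => maskAct (g s') (π s')) s)
      = ⨆ π : S → Fin d → ℝ, Vpi T r γ π s := by
  have hg₁ : ∀ s' i, g₁ s' i → g s' i := fun s' i h => by simp [hg, h]
  have hg₂ : ∀ s' i, g₂ s' i → g s' i := fun s' i h => by simp [hg, h]
  refine iSup_congr fun π => Vpi_congr γ (fun s' => ?_) (fun s' => ?_) s
  · exact apply_maskAct_of_imp (f := fun a => T (s', a)) (hT s') (hg₂ s') (π s')
  · exact apply_maskAct_of_imp (f := fun a => r (s', a)) (hr s') (hg₁ s') (π s')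

/-- Under the assumptions of the masking lemma and uniformly bounded rewards, the
optimal value over masked policies equals the optimal value over all policies. -/
theorem stmt8 {S : Type*} {d : ℕ}
    (T : S × (Fin d → ℝ) → S) (r : S × (Fin d → ℝ) → ℝ) (γ : ℝ)
    (hγ0 : 0 < γ) (hγ1 : γ < 1)
    (R : ℝ) (hR : ∀ (s : S) (a : Fin d → ℝ), |r (s, a)| ≤ R)
    (g₁ g₂ g : S → Fin d → Bool)
    (hg : ∀ (s : S) (i : Fin d), g s i = (g₁ s i || g₂ s i))
    (hr : ∀ (s : S) (a : Fin d → ℝ), r (s, maskAct (g₁ s) a) = r (s, a))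
    (hT : ∀ (s : S) (a : Fin d → ℝ), T (s, maskAct (g₂ s) a) = T (s, a))
    (s : S) :
    (⨆ π : S → Fin d → ℝ, Vpi T r γ (fun s' => maskAct (g s') (π s')) s)
      = ⨆ π : S → Fin d → ℝ, Vpi T r γ π s :=
  stmt8_general T r γ g₁ g₂ g hg hr hT s
end
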